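/- arXiv:1901.03024 — 2 statements merged into one kernel-verified Lean document; each statement's English description precedes it below -/
import Mathlib

section
/- Let n be a positive integer, let G be a real n×n matrix, let x, b be vectors in ℝⁿ, and let λ ≥ 0. Then the supremum, over all n×n matrices E with Frobenius norm ‖E‖_F ≤ λ and all vectors e ∈ ℝⁿ with Euclidean norm ‖e‖₂ ≤ λ, of the worst-case residual ‖(G + E)x − (b + e)‖₂ equals ‖Gx − b‖₂ + λ‖x‖₂ + λ. -/
/-!
The triangle inequality and the Cauchy–Schwarz bound `‖E x‖₂ ≤ ‖E‖_F ‖x‖₂` give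
`‖(G + E)x − (b + e)‖₂ ≤ ‖Gx − b‖₂ + λ‖x‖₂ + λ`. The bound is attained by pushing all three
terms in one unit direction `u` along `Gx − b`: take `e = −λu` and the rank-one matrix
`E = λ u xᵀ / ‖x‖₂`, whose Frobenius norm is `λ` (or `0` when `x = 0`).
-/

/-- Euclidean norm of a vector in ℝⁿ. -/
noncomputable def eNorm {n : ℕ} (v : Fin n → ℝ) : ℝ :=
  Real.sqrt (∑ i, v i ^ 2)

/-- Frobenius norm of a real matrix. -/
noncomputable def fNorm {m n : ℕ} (M : Matrix (Fin m) (Fin n) ℝ) : ℝ :=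
  Real.sqrt (∑ i, ∑ j, M i j ^ 2)

open Matrix

section

variable {m n : ℕ}

lemma eNorm_eq_norm_toLp (v : Fin n → ℝ) : eNorm v = ‖WithLp.toLp 2 v‖ := by
  simp [eNorm, EuclideanSpace.norm_eq]

lemma eNorm_nonneg (v : Fin n → ℝ) : 0 ≤ eNorm v :=
  Real.sqrt_nonneg _

lemma eNorm_eq_zero_iff {v : Fin n → ℝ} : eNorm v = 0 ↔ v = 0 := by
  rw [eNorm_eq_norm_toLp, norm_eq_zero, WithLp.toLp_eq_zero]

lemma eNorm_add_le (v w : Fin n → ℝ) : eNorm (v + w) ≤ eNorm v + eNorm w := by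
  simpa only [eNorm_eq_norm_toLp, WithLp.toLp_add] using norm_add_le _ _

lemma eNorm_sub_le (v w : Fin n → ℝ) : eNorm (v - w) ≤ eNorm v + eNorm w := by
  simpa only [eNorm_eq_norm_toLp, WithLp.toLp_sub] using norm_sub_le _ _

lemma eNorm_smul (c : ℝ) (v : Fin n → ℝ) : eNorm (c • v) = |c| * eNorm v := by
  rw [eNorm_eq_norm_toLp, eNorm_eq_norm_toLp, WithLp.toLp_smul, norm_smul, Real.norm_eq_abs]

lemma eNorm_neg (v : Fin n → ℝ) : eNorm (-v) = eNorm v := by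
  rw [eNorm_eq_norm_toLp, eNorm_eq_norm_toLp, WithLp.toLp_neg, norm_neg]

lemma dotProduct_self_eq_eNorm_sq (v : Fin n → ℝ) : v ⬝ᵥ v = eNorm v ^ 2 := by
  rw [eNorm, Real.sq_sqrt (by positivity)]
  simp only [dotProduct, sq]

lemma eNorm_mulVec_le (A : Matrix (Fin m) (Fin n) ℝ) (x : Fin n → ℝ) :
    eNorm (A *ᵥ x) ≤ fNorm A * eNorm x := by
  rw [eNorm, fNorm, eNorm, ← Real.sqrt_mul (by positivity), Finset.sum_mul]
  gcongr with i
  exact Finset.sum_mul_sq_le_sq_mul_sq Finset.univ (A i) x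

lemma fNorm_vecMulVec (u : Fin m → ℝ) (v : Fin n → ℝ) :
    fNorm (vecMulVec u v) = eNorm u * eNorm v := by
  rw [fNorm, eNorm, eNorm, ← Real.sqrt_mul (by positivity)]
  simp only [vecMulVec_apply, mul_pow, Finset.sum_mul_sum]

lemma exists_eNorm_eq_one_smul (hn : 0 < n) (v : Fin n → ℝ) :
    ∃ u, eNorm u = 1 ∧ v = eNorm v • u := by
  obtain rfl | hv := eq_or_ne v 0
  · refine ⟨Pi.single ⟨0, hn⟩ 1, ?_, by simp [eNorm]⟩
    simp [eNorm_eq_norm_toLp]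
  · have hv0 : eNorm v ≠ 0 := mt eNorm_eq_zero_iff.mp hv
    refine ⟨(eNorm v)⁻¹ • v, ?_, (smul_inv_smul₀ hv0 v).symm⟩
    rw [eNorm_smul, abs_inv, abs_of_nonneg (eNorm_nonneg v), inv_mul_cancel₀ hv0]

lemma exists_fNorm_le_mulVec_eq (x : Fin n → ℝ) (y : Fin m → ℝ) :
    ∃ E : Matrix (Fin m) (Fin n) ℝ, fNorm E ≤ eNorm y ∧ E *ᵥ x = eNorm x • y := by
  refine ⟨vecMulVec y ((eNorm x)⁻¹ • x), ?_, ?_⟩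
  · rw [fNorm_vecMulVec, eNorm_smul, abs_inv, abs_of_nonneg (eNorm_nonneg x), ← mul_assoc]
    exact inv_mul_right_le (eNorm_nonneg y)
  · rw [vecMulVec_mulVec, op_smul_eq_smul, smul_dotProduct, dotProduct_self_eq_eNorm_sq,
      smul_eq_mul, sq, ← mul_assoc, inv_mul_mul_self]

lemma eNorm_residual_le (G E : Matrix (Fin n) (Fin n) ℝ) (x b e : Fin n → ℝ) :
    eNorm ((G + E) *ᵥ x - (b + e)) ≤ eNorm (G *ᵥ x - b) + fNorm E * eNorm x + eNorm e := by
  have hsplit : (G + E) *ᵥ x - (b + e) = (G *ᵥ x - b + E *ᵥ x) - e := by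
    rw [add_mulVec]; abel
  calc eNorm ((G + E) *ᵥ x - (b + e))
      ≤ eNorm (G *ᵥ x - b + E *ᵥ x) + eNorm e := hsplit ▸ eNorm_sub_le _ _
    _ ≤ eNorm (G *ᵥ x - b) + eNorm (E *ᵥ x) + eNorm e := by gcongr; exact eNorm_add_le _ _
    _ ≤ eNorm (G *ᵥ x - b) + fNorm E * eNorm x + eNorm e := by gcongr; exact eNorm_mulVec_le _ _

end

/-- The supremum of the worst-case residual ‖(G + E)x − (b + e)‖₂ over all
perturbations with ‖E‖_F ≤ λ and ‖e‖₂ ≤ λ equals ‖Gx − b‖₂ + λ‖x‖₂ + λ. -/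
theorem robust_residual_sup_eq (n : ℕ) (hn : 0 < n)
    (G : Matrix (Fin n) (Fin n) ℝ) (x b : Fin n → ℝ) (lam : ℝ) (hlam : 0 ≤ lam) :
    sSup {r : ℝ | ∃ (E : Matrix (Fin n) (Fin n) ℝ) (e : Fin n → ℝ),
        fNorm E ≤ lam ∧ eNorm e ≤ lam ∧
        r = eNorm ((G + E).mulVec x - (b + e))} =
      eNorm (G.mulVec x - b) + lam * eNorm x + lam := by
  refine IsGreatest.csSup_eq ⟨?_, ?_⟩
  · obtain ⟨u, hu, hr⟩ := exists_eNorm_eq_one_smul hn (G *ᵥ x - b)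
    obtain ⟨E, hE, hEx⟩ := exists_fNorm_le_mulVec_eq x (lam • u)
    have hlu : eNorm (lam • u) = lam := by rw [eNorm_smul, hu, mul_one, abs_of_nonneg hlam]
    refine ⟨E, -(lam • u), hlu ▸ hE, by rw [eNorm_neg, hlu], ?_⟩
    have hR := eNorm_nonneg (G *ᵥ x - b)
    generalize eNorm (G *ᵥ x - b) = R at hR hr ⊢
    have hresidual : (G + E) *ᵥ x - (b + -(lam • u)) = (R + lam * eNorm x + lam) • u := by
      rw [add_mulVec, show G *ᵥ x = b + R • u from (sub_eq_iff_eq_add'.mp hr), hEx]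
      module
    rw [hresidual, eNorm_smul, hu, mul_one,
      abs_of_nonneg (add_nonneg (add_nonneg hR (mul_nonneg hlam (eNorm_nonneg x))) hlam)]
  · rintro _ ⟨E, e, hE, he, rfl⟩
    have hx := eNorm_nonneg x
    exact (eNorm_residual_le G E x b e).trans (by gcongr)
end

section
/- Let n be a positive integer, let G, K, A be real n×n matrices, and λ ≥ 0. Denote by Kᵢ and Aᵢ the i-th columns of K and A. Then the sum over the columns i = 1,…,n of the per-column worst-case residuals rᵢ = sup{ ‖(G + E)Kᵢ − (Aᵢ + e)‖₂ : ‖E‖_F ≤ λ, ‖e‖₂ ≤ λ } equals Σᵢ ‖GKᵢ − Aᵢ‖₂ + λ Σᵢ ‖Kᵢ‖₂ + λ·n. -/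
namespace AuxWCR

variable {n : ℕ}

lemma eNorm_eq (v : Fin n → ℝ) :
    eNorm v = ‖(WithLp.equiv 2 (Fin n → ℝ)).symm v‖ := by
  rw [EuclideanSpace.norm_eq]
  simp [eNorm, sq_abs]

lemma eNorm_nonneg (v : Fin n → ℝ) : 0 ≤ eNorm v := Real.sqrt_nonneg _

lemma eNorm_add_le (u v : Fin n → ℝ) : eNorm (u + v) ≤ eNorm u + eNorm v := by
  rw [eNorm_eq, eNorm_eq, eNorm_eq]
  have : (WithLp.equiv 2 (Fin n → ℝ)).symm (u + v)
      = (WithLp.equiv 2 (Fin n → ℝ)).symm u + (WithLp.equiv 2 (Fin n → ℝ)).symm v := rfl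
  rw [this]
  exact norm_add_le _ _

lemma eNorm_smul (c : ℝ) (v : Fin n → ℝ) : eNorm (c • v) = |c| * eNorm v := by
  rw [eNorm_eq, eNorm_eq]
  have : (WithLp.equiv 2 (Fin n → ℝ)).symm (c • v)
      = c • (WithLp.equiv 2 (Fin n → ℝ)).symm v := rfl
  rw [this, norm_smul, Real.norm_eq_abs]

lemma eNorm_neg (v : Fin n → ℝ) : eNorm (-v) = eNorm v := by
  simp [eNorm]

lemma eNorm_eq_zero {v : Fin n → ℝ} (h : eNorm v = 0) : v = 0 := by
  rw [eNorm_eq, norm_eq_zero] at h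
  have := congrArg (WithLp.equiv 2 (Fin n → ℝ)) h
  simpa using this

lemma sq_eNorm (v : Fin n → ℝ) : eNorm v ^ 2 = ∑ i, v i ^ 2 :=
  Real.sq_sqrt (by positivity)

lemma eNorm_mulVec_le (E : Matrix (Fin n) (Fin n) ℝ) (k : Fin n → ℝ) :
    eNorm (E.mulVec k) ≤ fNorm E * eNorm k := by
  have h1 : eNorm (E.mulVec k) ≤ Real.sqrt ((∑ i, ∑ j, E i j ^ 2) * ∑ j, k j ^ 2) := by
    unfold eNorm
    apply Real.sqrt_le_sqrt
    rw [Finset.sum_mul]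
    apply Finset.sum_le_sum
    intro i _
    have : E.mulVec k i = ∑ j, E i j * k j := by
      simp [Matrix.mulVec, dotProduct]
    rw [this]
    exact Finset.sum_mul_sq_le_sq_mul_sq Finset.univ _ _
  calc eNorm (E.mulVec k) ≤ _ := h1
    _ = fNorm E * eNorm k := by
        rw [Real.sqrt_mul (by positivity)]; rfl

lemma key (hn : 0 < n) (G : Matrix (Fin n) (Fin n) ℝ) (k a : Fin n → ℝ)
    (lam : ℝ) (hlam : 0 ≤ lam) :
    sSup {r : ℝ | ∃ (E : Matrix (Fin n) (Fin n) ℝ) (e : Fin n → ℝ),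
        fNorm E ≤ lam ∧ eNorm e ≤ lam ∧
        r = eNorm ((G + E).mulVec k - (a + e))} =
    eNorm (G.mulVec k - a) + lam * eNorm k + lam := by
  set d : Fin n → ℝ := G.mulVec k - a with hd
  set ρ : ℝ := eNorm d with hρ
  set β : ℝ := eNorm k with hβ
  have hρ0 : 0 ≤ ρ := eNorm_nonneg d
  have hβ0 : 0 ≤ β := eNorm_nonneg k
  -- the direction vector
  set u : Fin n → ℝ := if h : ρ = 0 then Pi.single ⟨0, hn⟩ 1 else ρ⁻¹ • d with hu
  have hu1 : eNorm u = 1 := by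
    by_cases h : ρ = 0
    · rw [hu]; simp only [h, dif_pos]
      unfold eNorm
      rw [Finset.sum_eq_single (⟨0, hn⟩ : Fin n)]
      · simp
      · intro b _ hb; simp [Pi.single_apply, hb]
      · simp
    · rw [hu]; simp only [h, dif_neg, not_false_iff]
      rw [eNorm_smul, abs_inv, abs_of_nonneg hρ0, ← hρ]
      field_simp
  have hdu : d = ρ • u := by
    by_cases h : ρ = 0
    · have : d = 0 := eNorm_eq_zero (by rw [← hρ, h])
      rw [this, h, zero_smul]
    · rw [hu]; simp only [h, dif_neg, not_false_iff]
      rw [smul_smul, mul_inv_cancel₀ h, one_smul]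
  have hsumu : ∑ i, u i ^ 2 = 1 := by
    have := sq_eNorm u; rw [hu1] at this; simpa using this.symm
  have hsumk : ∑ j, k j ^ 2 = β ^ 2 := (sq_eNorm k).symm
  set c : ℝ := if β = 0 then 0 else lam / β with hc
  set E : Matrix (Fin n) (Fin n) ℝ := Matrix.of fun i j => c * u i * k j with hE
  set e : Fin n → ℝ := (-lam) • u with he
  have hcβ : c * β ^ 2 = lam * β := by
    by_cases h : β = 0
    · simp [h]
    · rw [hc]; simp only [h, if_neg, not_false_iff]
      field_simp
  have hEmul : E.mulVec k = (lam * β) • u := by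
    funext i
    have : E.mulVec k i = ∑ j, (c * u i * k j) * k j := by
      simp [hE, Matrix.mulVec, dotProduct]
    rw [this]
    have : ∑ j, (c * u i * k j) * k j = c * u i * ∑ j, k j ^ 2 := by
      rw [Finset.mul_sum]; congr 1; funext j; ring
    rw [this, hsumk]
    simp only [Pi.smul_apply, smul_eq_mul]
    linear_combination u i * hcβ
  have hfE : fNorm E ≤ lam := by
    have hsum : ∑ i, ∑ j, E i j ^ 2 = c ^ 2 * β ^ 2 := by
      have : ∀ i, ∑ j, E i j ^ 2 = c ^ 2 * u i ^ 2 * β ^ 2 := by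
        intro i
        rw [← hsumk, Finset.mul_sum]
        congr 1; funext j; simp [hE]; ring
      rw [Finset.sum_congr rfl fun i _ => this i, ← Finset.sum_mul, ← Finset.mul_sum,
        hsumu]
      ring
    unfold fNorm
    rw [hsum]
    rw [show c ^ 2 * β ^ 2 = (c * β) ^ 2 by ring, Real.sqrt_sq_eq_abs]
    by_cases h : β = 0
    · simp [hc, h, hlam]
    · rw [hc]; simp only [h, if_neg, not_false_iff]
      rw [div_mul_cancel₀ _ h, abs_of_nonneg hlam]
  have heNorm : eNorm e ≤ lam := by
    rw [he, eNorm_smul, hu1, abs_neg, abs_of_nonneg hlam]; simp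
  have hresid : (G + E).mulVec k - (a + e) = (ρ + lam * β + lam) • u := by
    rw [Matrix.add_mulVec, hEmul]
    funext i
    simp only [Pi.sub_apply, Pi.add_apply, Pi.smul_apply, smul_eq_mul, he]
    have hdi : d i = ρ * u i := by rw [hdu]; simp
    have : G.mulVec k i - a i = d i := by simp [hd]
    nlinarith [this, hdi]
  have hval : eNorm ((G + E).mulVec k - (a + e)) = ρ + lam * β + lam := by
    rw [hresid, eNorm_smul, hu1, mul_one, abs_of_nonneg (by positivity)]
  apply IsGreatest.csSup_eq
  constructor
  · exact ⟨E, e, hfE, heNorm, hval.symm⟩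
  · rintro r ⟨E', e', hE', he', rfl⟩
    have h1 : (G + E').mulVec k - (a + e') = d + (E'.mulVec k + (-e')) := by
      rw [Matrix.add_mulVec]; funext i; simp [hd]; ring
    rw [h1]
    calc eNorm (d + (E'.mulVec k + (-e')))
        ≤ eNorm d + eNorm (E'.mulVec k + (-e')) := eNorm_add_le _ _
      _ ≤ eNorm d + (eNorm (E'.mulVec k) + eNorm (-e')) := by
          linarith [eNorm_add_le (E'.mulVec k) (-e')]
      _ ≤ ρ + (fNorm E' * eNorm k + eNorm e') := by
          rw [eNorm_neg]
          have := eNorm_mulVec_le E' k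
          simp only [← hρ]
          linarith
      _ ≤ ρ + lam * β + lam := by
          have : fNorm E' * eNorm k ≤ lam * β := by
            rw [← hβ]
            exact mul_le_mul_of_nonneg_right hE' hβ0
          linarith

end AuxWCR

/-- Column-wise aggregation: the sum over columns of per-column worst-case
residuals equals Σᵢ ‖GKᵢ − Aᵢ‖₂ + λ Σᵢ ‖Kᵢ‖₂ + λ·n. -/
theorem sum_columnwise_worst_case_residuals (n : ℕ) (hn : 0 < n)
    (G K A : Matrix (Fin n) (Fin n) ℝ) (lam : ℝ) (hlam : 0 ≤ lam) :
    ∑ i : Fin n,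
      sSup {r : ℝ | ∃ (E : Matrix (Fin n) (Fin n) ℝ) (e : Fin n → ℝ),
          fNorm E ≤ lam ∧ eNorm e ≤ lam ∧
          r = eNorm ((G + E).mulVec (fun j => K j i) -
            ((fun j => A j i) + e))} =
      (∑ i : Fin n, eNorm (G.mulVec (fun j => K j i) - fun j => A j i)) +
        lam * (∑ i : Fin n, eNorm (fun j => K j i)) + lam * n := by
  have h : ∀ i : Fin n,
      sSup {r : ℝ | ∃ (E : Matrix (Fin n) (Fin n) ℝ) (e : Fin n → ℝ),
          fNorm E ≤ lam ∧ eNorm e ≤ lam ∧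
          r = eNorm ((G + E).mulVec (fun j => K j i) -
            ((fun j => A j i) + e))} =
      eNorm (G.mulVec (fun j => K j i) - fun j => A j i)
        + lam * eNorm (fun j => K j i) + lam :=
    fun i => AuxWCR.key hn G (fun j => K j i) (fun j => A j i) lam hlam
  rw [Finset.sum_congr rfl fun i _ => h i]
  rw [Finset.sum_add_distrib, Finset.sum_add_distrib, ← Finset.mul_sum]
  simp [Finset.card_univ, mul_comm]
end
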